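/- arXiv:1511.00531 — 2 statements merged into one kernel-verified Lean document; each statement's English description precedes it below -/
import Mathlib

section
/- (Theorem 2.) For every γ ∈ (0,1], the maximum of the normalized guessing probability G = V/γ², over all γ-admissible triples (Π₀,Π₁,Π_∅) whose elements are all PPT, equals 1/2 + 1/(4√2); in particular this maximum is independent of γ. -/
open Matrix Complex Kronecker BigOperators ComplexOrder

noncomputable section

abbrev Mat2 := Matrix (Fin 2) (Fin 2) ℂ
abbrev Mat4 := Matrix (Fin 2 × Fin 2) (Fin 2 × Fin 2) ℂ

/-- Pauli X matrix -/
def PX : Mat2 := !![0, 1; 1, 0]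

/-- Pauli Y matrix -/
def PY : Mat2 := !![0, -Complex.I; Complex.I, 0]

/-- sign (−1)^b for a bit b -/
def bsign (b : Bool) : ℂ := if b then -1 else 1

/-- boolean function f(x̄,ȳ) = (x₁·y₁) XOR x₂ XOR y₂ -/
def fxy (x y : Bool × Bool) : Bool := (((x.1 && y.1)).xor x.2).xor y.2

/-- qubit input states ω_{x̄}: ω_{(0,x₂)} = (I+(−1)^{x₂}X)/2, ω_{(1,x₂)} = (I+(−1)^{x₂}Y)/2 -/
def omg (x : Bool × Bool) : Mat2 :=
  (1/2 : ℂ) • ((1 : Mat2) + bsign x.2 • (if x.1 then PY else PX))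

/-- qubit input states τ_{ȳ} = (I+(−1)^{y₂}(X+(−1)^{y₁}Y)/√2)/2 -/
def tau (y : Bool × Bool) : Mat2 :=
  (1/2 : ℂ) • ((1 : Mat2) + (bsign y.2 / (Real.sqrt 2 : ℂ)) • (PX + bsign y.1 • PY))

/-- averaged input states ρ₀ (for c = false) and ρ₁ (for c = true) -/
def rho (c : Bool) : Mat4 :=
  (1/8 : ℂ) • ∑ x : Bool × Bool, ∑ y : Bool × Bool,
    (if fxy x y = c then omg x ⊗ₖ tau y else 0)

/-- standard basis vectors of ℂ⁴ ≅ ℂ² ⊗ ℂ² -/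
def ket (i j : Fin 2) : (Fin 2 × Fin 2) → ℂ := fun p => if p = (i, j) then 1 else 0

def PhiP : (Fin 2 × Fin 2) → ℂ := fun p => (1 / (Real.sqrt 2 : ℂ)) * (ket 0 0 p + ket 1 1 p)
def PhiM : (Fin 2 × Fin 2) → ℂ := fun p => (1 / (Real.sqrt 2 : ℂ)) * (ket 0 0 p - ket 1 1 p)
def PsiP : (Fin 2 × Fin 2) → ℂ := fun p => (1 / (Real.sqrt 2 : ℂ)) * (ket 0 1 p + ket 1 0 p)
def PsiM : (Fin 2 × Fin 2) → ℂ := fun p => (1 / (Real.sqrt 2 : ℂ)) * (ket 0 1 p - ket 1 0 p)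

/-- rank one projector |v⟩⟨v| -/
def proj (v : (Fin 2 × Fin 2) → ℂ) : Mat4 := Matrix.vecMulVec v (star v)

/-- a γ-admissible measurement triple -/
def Admissible (γ : ℝ) (P0 P1 Pe : Mat4) : Prop :=
  P0.PosSemidef ∧ P1.PosSemidef ∧ Pe.PosSemidef ∧
  P0 + P1 + Pe = 1 ∧
  ∀ x y : Bool × Bool, ((omg x ⊗ₖ tau y) * Pe).trace = 1 - (γ : ℂ)^2

/-- guessing value V = (1/2)·Tr[ρ₀Π₀ + ρ₁Π₁] (a real number) -/
def Gval (P0 P1 : Mat4) : ℝ := (1/2) * ((rho false * P0 + rho true * P1).trace).re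

/-- partial transpose over the second tensor factor -/
def ptransB (M : Mat4) : Mat4 := Matrix.of fun p q => M (p.1, q.2) (q.1, p.2)

/-- positivity under partial transpose -/
def IsPPT (M : Mat4) : Prop := M.PosSemidef ∧ (ptransB M).PosSemidef

/-
Both averaged states are `ρ_c = I/4 + (-1)^c (√2/8) T` with `T = |01⟩⟨10| + |10⟩⟨01|`, and they
admit the decomposition `ρ_c = (1/4 + √2/16) I - (√2/8) (|ψ_c⟩⟨ψ_c| + (|φ_c⟩⟨φ_c|)^{T_B})` with Bell
vectors `ψ_c, φ_c`. Since `Tr[|ψ⟩⟨ψ| Π] ≥ 0` and `Tr[(|φ⟩⟨φ|)^{T_B} Π] = Tr[|φ⟩⟨φ| Π^{T_B}] ≥ 0` for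
PPT `Π`, this gives `Tr[ρ_c Π] ≤ (1/4 + √2/16) Tr Π`. Averaging the abstention constraints over
all sixteen inputs gives `Tr Π_∅ = 4 (1 - γ²)`, so `Tr Π₀ + Tr Π₁ = 4 γ²` and
`V ≤ γ² (1/2 + √2/8)`. The bound is attained by `Π_c = (γ²/2) (I ± T)`, `Π_∅ = (1 - γ²) I`.
-/

open scoped MatrixOrder in
theorem Matrix.PosSemidef.trace_mul_nonneg {𝕜 n : Type*} [RCLike 𝕜] [Fintype n]
    {A B : Matrix n n 𝕜} (hA : A.PosSemidef) (hB : B.PosSemidef) : 0 ≤ (A * B).trace := by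
  classical
  obtain ⟨X, rfl⟩ := CStarAlgebra.nonneg_iff_eq_star_mul_self.mp hA.nonneg
  rw [star_eq_conjTranspose, Matrix.mul_assoc, trace_mul_comm]
  exact (hB.mul_mul_conjTranspose_same X).trace_nonneg

section symmSingle

variable {n : Type*} [DecidableEq n] {p q : n}

def symmSingle (p q : n) : Matrix n n ℂ := single p q 1 + single q p 1

lemma one_add_bsign_smul_symmSingle (hpq : p ≠ q) (b : Bool) :
    1 + bsign b • symmSingle p q =
      diagonal (fun i => if i = p ∨ i = q then 0 else 1) +
        vecMulVec (Pi.single p 1 + bsign b • Pi.single q 1)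
          (star (Pi.single p 1 + bsign b • Pi.single q 1)) := by
  ext i j
  simp only [symmSingle, Matrix.add_apply, Matrix.smul_apply, one_apply, single_apply,
    vecMulVec_apply, Pi.add_apply, Pi.smul_apply, Pi.star_apply, Pi.single_apply, diagonal_apply]
  cases b <;> split_ifs <;> simp [bsign] <;> grind

lemma posSemidef_one_add_bsign_smul_symmSingle [Fintype n] (hpq : p ≠ q) (b : Bool) :
    (1 + bsign b • symmSingle p q).PosSemidef := by
  rw [one_add_bsign_smul_symmSingle hpq]
  refine .add (.diagonal fun i => ?_) (posSemidef_vecMulVec_self_star _)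
  split_ifs <;> norm_num

lemma trace_symmSingle [Fintype n] (hpq : p ≠ q) : (symmSingle p q).trace = 0 := by
  simp [symmSingle, trace_single_eq_of_ne, hpq, hpq.symm]

lemma trace_symmSingle_mul_self [Fintype n] (hpq : p ≠ q) :
    (symmSingle p q * symmSingle p q).trace = 2 := by
  simp [symmSingle, add_mul, mul_add, single_mul_single_same, single_mul_single_of_ne, hpq,
    hpq.symm]
  norm_num

end symmSingle

lemma trace_ptransB_mul (M P : Mat4) : (ptransB M * P).trace = (M * ptransB P).trace := by
  simp [Matrix.trace, Matrix.mul_apply, ptransB, Fintype.sum_prod_type, Fin.sum_univ_two]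
  ring

lemma ptransB_smul (a : ℂ) (M : Mat4) : ptransB (a • M) = a • ptransB M := rfl

lemma ptransB_one : ptransB (1 : Mat4) = 1 := by
  ext ⟨i, j⟩ ⟨k, l⟩
  fin_cases i <;> fin_cases j <;> fin_cases k <;> fin_cases l <;> simp [ptransB, one_apply]

lemma ptransB_one_add_smul_symmSingle (s : ℂ) :
    ptransB (1 + s • symmSingle (0, 1) (1, 0)) = 1 + s • symmSingle (0, 0) (1, 1) := by
  ext ⟨i, j⟩ ⟨k, l⟩
  fin_cases i <;> fin_cases j <;> fin_cases k <;> fin_cases l <;>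
    simp [ptransB, symmSingle, one_apply, single_apply]

lemma sqrt_two_sq_complex : ((Real.sqrt 2 : ℂ)) ^ 2 = 2 := by
  rw [← Complex.ofReal_pow, Real.sq_sqrt zero_le_two]; norm_num

-- `symmSingle (0, 1) (1, 0) = (X ⊗ X + Y ⊗ Y) / 2`
set_option maxHeartbeats 400000 in
lemma rho_eq (c : Bool) :
    rho c = (1/4 : ℂ) • 1 + (bsign c * Real.sqrt 2 / 8) • symmSingle (0, 1) (1, 0) := by
  have : (Real.sqrt 2 : ℂ) ≠ 0 := by simp
  ext ⟨i, j⟩ ⟨k, l⟩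
  cases c <;> fin_cases i <;> fin_cases j <;> fin_cases k <;> fin_cases l <;>
    simp [rho, fxy, omg, tau, PX, PY, bsign, symmSingle, Fintype.sum_prod_type] <;>
    field_simp <;> ring_nf <;> simp [sqrt_two_sq_complex] <;> norm_num

lemma rho_false_add_rho_true : rho false + rho true = (1/2 : ℂ) • 1 := by
  rw [rho_eq, rho_eq]
  norm_num [bsign]
  module

lemma trace_rho_add_mul (M : Mat4) :
    ((rho false + rho true) * M).trace =
      (1/8) * ∑ x : Bool × Bool, ∑ y : Bool × Bool, ((omg x ⊗ₖ tau y) * M).trace := by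
  have : rho false + rho true =
      (1/8 : ℂ) • ∑ x : Bool × Bool, ∑ y : Bool × Bool, omg x ⊗ₖ tau y := by
    simp only [rho, ← smul_add, ← Finset.sum_add_distrib]
    congr! 3 with x _ y _
    cases fxy x y <;> simp
  simp [this, Matrix.sum_mul, trace_sum]

lemma proj_add_ptransB_proj (c : Bool) :
    proj (if c then PsiP else PsiM) + ptransB (proj (if c then PhiP else PhiM)) =
      (1/2 : ℂ) • 1 - bsign c • symmSingle (0, 1) (1, 0) := by
  ext ⟨i, j⟩ ⟨k, l⟩
  cases c <;> fin_cases i <;> fin_cases j <;> fin_cases k <;> fin_cases l <;>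
    simp [proj, ptransB, vecMulVec_apply, PsiP, PsiM, PhiP, PhiM, ket, bsign, symmSingle,
      one_apply, Complex.conj_ofReal] <;>
    field_simp <;> simp [sqrt_two_sq_complex] <;> norm_num

lemma rho_eq_sub_smul_proj_add_ptransB (c : Bool) :
    rho c = ((1/4 + Real.sqrt 2 / 16 : ℝ) : ℂ) • 1 - ((Real.sqrt 2 / 8 : ℝ) : ℂ) •
      (proj (if c then PsiP else PsiM) + ptransB (proj (if c then PhiP else PhiM))) := by
  rw [rho_eq, proj_add_ptransB_proj]
  push_cast
  module

lemma trace_mul_le_of_eq_sub_smul_add_ptransB {ρ Q R P : Mat4} {a b : ℝ} (hb : 0 ≤ b)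
    (hρ : ρ = (a : ℂ) • 1 - (b : ℂ) • (Q + ptransB R)) (hQ : Q.PosSemidef) (hR : R.PosSemidef)
    (hP : IsPPT P) : (ρ * P).trace ≤ a * P.trace := by
  have hQR : 0 ≤ (Q * P).trace + (R * ptransB P).trace :=
    add_nonneg (hQ.trace_mul_nonneg hP.1) (hR.trace_mul_nonneg hP.2)
  rw [hρ, Matrix.sub_mul, Matrix.smul_mul, Matrix.smul_mul, Matrix.one_mul, Matrix.add_mul,
    trace_sub, trace_smul, trace_smul, trace_add, trace_ptransB_mul, smul_eq_mul, smul_eq_mul]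
  exact sub_le_self _ (mul_nonneg (Complex.zero_le_real.mpr hb) hQR)

lemma trace_rho_mul_le (c : Bool) {P : Mat4} (hP : IsPPT P) :
    (rho c * P).trace ≤ ((1/4 + Real.sqrt 2 / 16 : ℝ) : ℂ) * P.trace :=
  trace_mul_le_of_eq_sub_smul_add_ptransB (by positivity) (rho_eq_sub_smul_proj_add_ptransB c)
    (posSemidef_vecMulVec_self_star _) (posSemidef_vecMulVec_self_star _) hP

namespace Admissible

variable {γ : ℝ} {P0 P1 Pe : Mat4}

lemma trace_abstain (h : Admissible γ P0 P1 Pe) : Pe.trace = 4 * (1 - (γ : ℂ) ^ 2) := by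
  have h16 := trace_rho_add_mul Pe
  simp only [h.2.2.2.2, Finset.sum_const, Finset.card_univ, Fintype.card_prod, Fintype.card_bool,
    rho_false_add_rho_true, Matrix.smul_mul, Matrix.one_mul, trace_smul, smul_eq_mul] at h16
  linear_combination 2 * h16

lemma trace_add_trace (h : Admissible γ P0 P1 Pe) : P0.trace + P1.trace = 4 * (γ : ℂ) ^ 2 := by
  have := congrArg trace h.2.2.2.1
  rw [trace_add, trace_add, trace_one, h.trace_abstain] at this
  norm_num at this
  linear_combination this

lemma Gval_le (h : Admissible γ P0 P1 Pe) (h0 : IsPPT P0) (h1 : IsPPT P1) :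
    Gval P0 P1 ≤ γ ^ 2 * (1/2 + Real.sqrt 2 / 8) := by
  have hle : (rho false * P0 + rho true * P1).trace ≤
      ((γ ^ 2 * (1/2 + Real.sqrt 2 / 8) * 2 : ℝ) : ℂ) := by
    calc (rho false * P0 + rho true * P1).trace
        ≤ ((1/4 + Real.sqrt 2 / 16 : ℝ) : ℂ) * P0.trace
          + ((1/4 + Real.sqrt 2 / 16 : ℝ) : ℂ) * P1.trace := by
          rw [trace_add]; exact add_le_add (trace_rho_mul_le false h0) (trace_rho_mul_le true h1)
      _ = ((γ ^ 2 * (1/2 + Real.sqrt 2 / 8) * 2 : ℝ) : ℂ) := by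
          rw [← mul_add, h.trace_add_trace]; push_cast; ring
  have := (Complex.le_def.mp hle).1
  rw [Complex.ofReal_re] at this
  rw [Gval]
  linarith

end Admissible

def guessOp (γ : ℝ) (c : Bool) : Mat4 :=
  ((γ ^ 2 / 2 : ℝ) : ℂ) • (1 + bsign c • symmSingle (0, 1) (1, 0))

def abstainOp (γ : ℝ) : Mat4 := ((1 - γ ^ 2 : ℝ) : ℂ) • 1

lemma isPPT_guessOp (γ : ℝ) (c : Bool) : IsPPT (guessOp γ c) := by
  have hγ : (0 : ℂ) ≤ ((γ ^ 2 / 2 : ℝ) : ℂ) := Complex.zero_le_real.mpr (by positivity)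
  refine ⟨.smul (posSemidef_one_add_bsign_smul_symmSingle (by decide) c) hγ, ?_⟩
  rw [guessOp, ptransB_smul, ptransB_one_add_smul_symmSingle]
  exact .smul (posSemidef_one_add_bsign_smul_symmSingle (by decide) c) hγ

lemma isPPT_abstainOp {γ : ℝ} (hγ : γ ^ 2 ≤ 1) : IsPPT (abstainOp γ) := by
  have hPe : (abstainOp γ).PosSemidef := .smul .one (Complex.zero_le_real.mpr (by linarith))
  refine ⟨hPe, ?_⟩
  rwa [abstainOp, ptransB_smul, ptransB_one]

lemma trace_omg (x : Bool × Bool) : (omg x).trace = 1 := by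
  rcases x with ⟨_ | _, _ | _⟩ <;> simp [omg, PX, PY, bsign, trace_fin_two]

lemma trace_tau (y : Bool × Bool) : (tau y).trace = 1 := by
  rcases y with ⟨_ | _, _ | _⟩ <;> simp [tau, PX, PY, bsign, trace_fin_two]

lemma admissible_witness {γ : ℝ} (hγ : γ ^ 2 ≤ 1) :
    Admissible γ (guessOp γ false) (guessOp γ true) (abstainOp γ) := by
  refine ⟨(isPPT_guessOp γ false).1, (isPPT_guessOp γ true).1, (isPPT_abstainOp hγ).1, ?_,
    fun x y => ?_⟩
  · simp only [guessOp, abstainOp, bsign]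
    push_cast
    module
  · simp [abstainOp, trace_kronecker, trace_omg, trace_tau]

lemma Gval_witness (γ : ℝ) :
    Gval (guessOp γ false) (guessOp γ true) = γ ^ 2 * (1/2 + Real.sqrt 2 / 8) := by
  have hp : ((0 : Fin 2), (1 : Fin 2)) ≠ (1, 0) := by decide
  have htr : (rho false * guessOp γ false + rho true * guessOp γ true).trace =
      ((γ ^ 2 * (1/2 + Real.sqrt 2 / 8) * 2 : ℝ) : ℂ) := by
    simp only [rho_eq, guessOp, add_mul, mul_add, Matrix.smul_mul, Matrix.mul_smul,
      Matrix.one_mul, Matrix.mul_one, trace_add, trace_smul, trace_one, trace_symmSingle hp,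
      trace_symmSingle_mul_self hp, smul_eq_mul, bsign]
    push_cast
    norm_num
    ring
  rw [Gval, htr, Complex.ofReal_re]
  ring

lemma one_div_four_mul_sqrt_two : 1 / (4 * Real.sqrt 2) = Real.sqrt 2 / 8 := by
  field_simp
  rw [Real.sq_sqrt zero_le_two]
  norm_num

/-- Theorem 2: for every γ ∈ (0,1], the maximum of G = V/γ² over all
γ-admissible PPT triples equals 1/2 + 1/(4√2), independently of γ. -/
theorem optimal_ppt_guessing_probability (γ : ℝ) (hγ : 0 < γ) (hγ' : γ ≤ 1) :
    IsGreatest {g : ℝ | ∃ P0 P1 Pe : Mat4, Admissible γ P0 P1 Pe ∧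
        IsPPT P0 ∧ IsPPT P1 ∧ IsPPT Pe ∧ g = Gval P0 P1 / γ^2}
      (1/2 + 1/(4*Real.sqrt 2)) := by
  have hγ2 : 0 < γ ^ 2 := by positivity
  have hγ2' : γ ^ 2 ≤ 1 := pow_le_one₀ hγ.le hγ'
  rw [one_div_four_mul_sqrt_two]
  refine ⟨⟨_, _, _, admissible_witness hγ2', isPPT_guessOp γ false, isPPT_guessOp γ true,
    isPPT_abstainOp hγ2', ?_⟩, ?_⟩
  · rw [Gval_witness]
    field_simp
  · rintro g ⟨P0, P1, Pe, h, h0, h1, -, rfl⟩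
    rw [div_le_iff₀ hγ2]
    linarith [h.Gval_le h0 h1]
end
end

section
/- (Pretty good quantum strategy, intermediate regime.) Fix γ with 1/2 < γ < 1/√2 and let φ = |Ψ⁺⟩⟨Ψ⁺| on ℂ²⊗ℂ². Let Q₀ = R₀ = |Ψ⁺⟩⟨Ψ⁺| + (γ−1/2)(|00⟩⟨00|+|11⟩⟨11|) and Q₁ = R₁ = |Ψ⁻⟩⟨Ψ⁻| + (γ−1/2)(|00⟩⟨00|+|11⟩⟨11|), and define the effective two-qubit operators M_{a,b}[(i,k),(j,l)] = Σ_{i',k',i'',k''} Q_a[(i,i'),(j,i'')]·R_b[(k,k'),(l,k'')]·φ[(i'',k''),(i',k')]. Then with Π₀ = M_{0,0}+M_{1,1}, Π₁ = M_{0,1}+M_{1,0}, Π_∅ = I₄−Π₀−Π₁, the triple (Π₀,Π₁,Π_∅) is γ-admissible and V = (1/2)·Tr[ρ₀Π₀ + ρ₁Π₁] = γ²/2 + 1/(8√2), i.e., the postselected Bell value equals 1/(√2·γ²). -/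
open Matrix Complex Kronecker BigOperators ComplexOrder

noncomputable section

/-- effective two-qubit operator: partial trace over the target systems of
    (Q_a ⊗ R_b)(I_A ⊗ φ_{A'B'} ⊗ I_B) -/
def effM (Q R phi : Mat4) : Mat4 := Matrix.of fun p q =>
  ∑ i' : Fin 2, ∑ k' : Fin 2, ∑ i'' : Fin 2, ∑ k'' : Fin 2,
    Q (p.1, i') (q.1, i'') * R (p.2, k') (q.2, k'') * phi (i'', k'') (i', k')

/-- Bell-state-measurement POVM elements of the intermediate regime -/
def Qmid (γ : ℝ) : Bool → Mat4 := fun a =>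
  (if a then proj PsiM else proj PsiP)
    + (γ - 1/2 : ℝ) • (proj (ket 0 0) + proj (ket 1 1))

/-!
Entanglement swapping through |Ψ⁺⟩ turns the two measurements into
Π_c = (γ - 1/2) P_even + (γ - 1/2)² P_odd + 1/2 |Ψ_c⟩⟨Ψ_c|, with Ψ_0 = Ψ⁺, Ψ_1 = Ψ⁻ and
P_even, P_odd the projectors onto span{|00⟩, |11⟩} and span{|01⟩, |10⟩}. Hence
Π_∅ = (2 - 2γ) P_even + (2γ - 2γ²) P_odd, which is positive for 1/2 ≤ γ ≤ 1.
Every input ω_x ⊗ τ_y has all diagonal entries 1/4, so it sees only the traces of the parity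
projectors: this gives Tr[(ω_x ⊗ τ_y) Π_∅] = 1 - γ², and the parity part of Π_f, f = f(x, y),
contributes γ²/2 - 1/8. The off-diagonal correlation of ω_x ⊗ τ_y is (-1)^f / (2√2), so the
Bell part contributes 1/2 ⟨Ψ_f| ω_x ⊗ τ_y |Ψ_f⟩ = (1 + 1/√2)/8. Every input is thus guessed
with the same weight γ²/2 + 1/(8√2), which is therefore V.
-/

lemma inv_sqrt_two_mul_self : ((Real.sqrt 2 : ℂ))⁻¹ * (Real.sqrt 2 : ℂ)⁻¹ = 1 / 2 := by
  rw [← mul_inv, ← Complex.ofReal_mul, Real.mul_self_sqrt zero_le_two]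
  norm_num

lemma proj_ket_apply (i j : Fin 2) (p q : Fin 2 × Fin 2) :
    proj (ket i j) p q = ket i j p * ket i j q := by
  simp [proj, vecMulVec_apply, ket, apply_ite (star : ℂ → ℂ)]

lemma proj_PsiP_apply (p q : Fin 2 × Fin 2) :
    proj PsiP p q = (ket 0 1 p + ket 1 0 p) * (ket 0 1 q + ket 1 0 q) / 2 := by
  simp only [proj, vecMulVec_apply, PsiP, one_div, ket, Pi.star_apply, star_mul', star_inv₀,
    RCLike.star_def, conj_ofReal, star_add, apply_ite (star : ℂ → ℂ), star_one, star_zero]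
  rw [mul_mul_mul_comm, inv_sqrt_two_mul_self]
  ring

lemma proj_PsiM_apply (p q : Fin 2 × Fin 2) :
    proj PsiM p q = (ket 0 1 p - ket 1 0 p) * (ket 0 1 q - ket 1 0 q) / 2 := by
  simp only [proj, vecMulVec_apply, PsiM, one_div, ket, Pi.star_apply, star_mul', star_inv₀,
    RCLike.star_def, conj_ofReal, star_sub, apply_ite (star : ℂ → ℂ), star_one, star_zero]
  rw [mul_mul_mul_comm, inv_sqrt_two_mul_self]
  ring

lemma posSemidef_proj (v : (Fin 2 × Fin 2) → ℂ) : (proj v).PosSemidef :=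
  posSemidef_vecMulVec_self_star v

lemma trace_mul_proj (A : Mat4) (v : (Fin 2 × Fin 2) → ℂ) :
    (A * proj v).trace = (A *ᵥ v) ⬝ᵥ star v := by
  rw [proj, mul_vecMulVec, trace_vecMulVec]

def evenParityProj : Mat4 := proj (ket 0 0) + proj (ket 1 1)
def oddParityProj : Mat4 := proj (ket 0 1) + proj (ket 1 0)

lemma evenParityProj_add_oddParityProj : evenParityProj + oddParityProj = 1 := by
  ext ⟨i, k⟩ ⟨j, l⟩
  fin_cases i <;> fin_cases k <;> fin_cases j <;> fin_cases l <;>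
    simp [evenParityProj, oddParityProj, proj_ket_apply, ket]

lemma proj_PsiP_add_proj_PsiM : proj PsiP + proj PsiM = oddParityProj := by
  ext p q
  simp only [Matrix.add_apply, proj_PsiP_apply, proj_PsiM_apply, oddParityProj, proj_ket_apply]
  ring

lemma posSemidef_parity {a b : ℝ} (ha : 0 ≤ a) (hb : 0 ≤ b) :
    (a • evenParityProj + b • oddParityProj).PosSemidef :=
  (((posSemidef_proj _).add (posSemidef_proj _)).smul ha).add
    (((posSemidef_proj _).add (posSemidef_proj _)).smul hb)

def bellPsi (c : Bool) : (Fin 2 × Fin 2) → ℂ := if c then PsiM else PsiP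

lemma effM_proj_PsiP_apply (Q R : Mat4) (i k j l : Fin 2) :
    effM Q R (proj PsiP) (i, k) (j, l) =
      (Q (i, 0) (j, 0) * R (k, 1) (l, 1) + Q (i, 0) (j, 1) * R (k, 1) (l, 0)
        + Q (i, 1) (j, 0) * R (k, 0) (l, 1) + Q (i, 1) (j, 1) * R (k, 0) (l, 0)) / 2 := by
  simp only [effM, of_apply, proj_PsiP_apply, ket, Prod.mk.injEq, Fin.sum_univ_two, zero_ne_one,
    one_ne_zero, and_false, and_true, if_true, if_false, zero_add, add_zero]
  ring

lemma Qmid_apply (γ : ℝ) (a : Bool) (p q : Fin 2 × Fin 2) : Qmid γ a p q =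
    proj (bellPsi a) p q + (γ - 1/2 : ℂ) * (ket 0 0 p * ket 0 0 q + ket 1 1 p * ket 1 1 q) := by
  simp only [Qmid, bellPsi, apply_ite proj, Matrix.add_apply, Matrix.smul_apply, proj_ket_apply,
    Complex.real_smul]
  push_cast
  rfl

-- Π_c collects the pairs of Bell outcomes (a, b) with a XOR b = c.
def guessEffect (γ : ℝ) (c : Bool) : Mat4 :=
  effM (Qmid γ false) (Qmid γ c) (proj PsiP) + effM (Qmid γ true) (Qmid γ !c) (proj PsiP)

lemma guessEffect_false (γ : ℝ) : guessEffect γ false =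
    effM (Qmid γ false) (Qmid γ false) (proj PsiP) + effM (Qmid γ true) (Qmid γ true) (proj PsiP) :=
  rfl

lemma guessEffect_true (γ : ℝ) : guessEffect γ true =
    effM (Qmid γ false) (Qmid γ true) (proj PsiP) + effM (Qmid γ true) (Qmid γ false) (proj PsiP) :=
  rfl

lemma guessEffect_eq (γ : ℝ) (c : Bool) : guessEffect γ c =
    (γ - 1/2) • evenParityProj + (γ - 1/2) ^ 2 • oddParityProj + (1/2 : ℝ) • proj (bellPsi c) := by
  ext ⟨i, k⟩ ⟨j, l⟩
  cases c <;> fin_cases i <;> fin_cases k <;> fin_cases j <;> fin_cases l <;>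
    simp [guessEffect, effM_proj_PsiP_apply, Qmid_apply, bellPsi, proj_PsiP_apply, proj_PsiM_apply,
      evenParityProj, oddParityProj, proj_ket_apply, ket] <;> ring

lemma posSemidef_guessEffect {γ : ℝ} (hγ : 1/2 ≤ γ) (c : Bool) : (guessEffect γ c).PosSemidef := by
  rw [guessEffect_eq]
  exact (posSemidef_parity (by linarith) (sq_nonneg _)).add
    ((posSemidef_proj _).smul (by norm_num))

lemma one_sub_guessEffect (γ : ℝ) : 1 - guessEffect γ false - guessEffect γ true =
    (2 - 2 * γ) • evenParityProj + (2 * γ - 2 * γ ^ 2) • oddParityProj := by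
  rw [guessEffect_eq, guessEffect_eq, ← evenParityProj_add_oddParityProj]
  simp only [bellPsi, Bool.false_eq_true, if_false, if_true]
  linear_combination (norm := module) (-(1/2 : ℝ)) • proj_PsiP_add_proj_PsiM

lemma omg_apply_self (x : Bool × Bool) (i : Fin 2) : omg x i i = 1/2 := by
  rcases x with ⟨_ | _, _ | _⟩ <;> fin_cases i <;> simp [omg, PX, PY, bsign]

lemma tau_apply_self (y : Bool × Bool) (j : Fin 2) : tau y j j = 1/2 := by
  rcases y with ⟨_ | _, _ | _⟩ <;> fin_cases j <;> simp [tau, PX, PY, bsign]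

lemma trace_kronecker_mul_proj_ket (A B : Mat2) (i j : Fin 2) :
    ((A ⊗ₖ B) * proj (ket i j)).trace = A i i * B j j := by
  rw [trace_mul_proj]
  simp [ket, dotProduct, mulVec, apply_ite (star : ℂ → ℂ)]

lemma trace_kronecker_mul_parity (x y : Bool × Bool) (a b : ℝ) :
    ((omg x ⊗ₖ tau y) * (a • evenParityProj + b • oddParityProj)).trace = (a + b) / 2 := by
  simp only [evenParityProj, oddParityProj, Matrix.mul_add, Matrix.mul_smul, trace_add,
    trace_smul, trace_kronecker_mul_proj_ket, omg_apply_self, tau_apply_self, Complex.real_smul]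
  ring

lemma trace_kronecker_mul_proj_bellPsi (A B : Mat2) (c : Bool) :
    ((A ⊗ₖ B) * proj (bellPsi c)).trace =
      (A 0 0 * B 1 1 + A 1 1 * B 0 0 + bsign c * (A 0 1 * B 1 0 + A 1 0 * B 0 1)) / 2 := by
  cases c <;>
  · simp [trace, mul_apply, bellPsi, bsign, proj_PsiP_apply, proj_PsiM_apply, ket,
      Fintype.sum_prod_type]
    ring

lemma omg_tau_offDiag_eq_bsign_fxy (x y : Bool × Bool) :
    omg x 0 1 * tau y 1 0 + omg x 1 0 * tau y 0 1 = bsign (fxy x y) / (2 * Real.sqrt 2) := by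
  rcases x with ⟨_ | _, _ | _⟩ <;> rcases y with ⟨_ | _, _ | _⟩ <;>
    simp [omg, tau, PX, PY, bsign, fxy] <;> ring_nf <;> simp only [I_sq] <;> ring

lemma trace_kronecker_mul_proj_bellPsi_fxy (x y : Bool × Bool) :
    ((omg x ⊗ₖ tau y) * proj (bellPsi (fxy x y))).trace = (1 + 1 / Real.sqrt 2) / 4 := by
  have hsign : bsign (fxy x y) * bsign (fxy x y) = 1 := by cases fxy x y <;> simp [bsign]
  rw [trace_kronecker_mul_proj_bellPsi, omg_apply_self, omg_apply_self, tau_apply_self,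
    tau_apply_self, omg_tau_offDiag_eq_bsign_fxy]
  linear_combination hsign / (4 * (Real.sqrt 2 : ℂ))

lemma trace_kronecker_mul_guessEffect_fxy (γ : ℝ) (x y : Bool × Bool) :
    ((omg x ⊗ₖ tau y) * guessEffect γ (fxy x y)).trace =
      ((γ ^ 2 / 2 + 1 / (8 * Real.sqrt 2) : ℝ) : ℂ) := by
  rw [guessEffect_eq, Matrix.mul_add, trace_add, trace_kronecker_mul_parity, Matrix.mul_smul,
    trace_smul, trace_kronecker_mul_proj_bellPsi_fxy, Complex.real_smul]
  push_cast
  ring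

lemma Gval_eq_of_trace_eq (P : Bool → Mat4) (t : ℝ)
    (h : ∀ x y, ((omg x ⊗ₖ tau y) * P (fxy x y)).trace = t) : Gval (P false) (P true) = t := by
  have hsplit : ∀ c, (rho c * P c).trace =
      (1/8 : ℂ) * ∑ x : Bool × Bool, ∑ y : Bool × Bool, if fxy x y = c then (t : ℂ) else 0 := by
    intro c
    simp only [rho, smul_mul_assoc, Finset.sum_mul, ite_mul, Matrix.zero_mul, trace_smul,
      trace_sum, apply_ite trace, trace_zero, smul_eq_mul]
    congr! 4 with x _ y _ hc
    rw [← hc, h]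
  have hcases : ∀ x y : Bool × Bool,
      ((if fxy x y = false then (t : ℂ) else 0) + if fxy x y = true then (t : ℂ) else 0) = t := by
    intro x y
    cases fxy x y <;> simp
  have htrace : (rho false * P false + rho true * P true).trace = (2 * t : ℝ) := by
    rw [trace_add, hsplit, hsplit, ← mul_add, ← Finset.sum_add_distrib]
    simp only [← Finset.sum_add_distrib, hcases, Finset.sum_const, Finset.card_univ,
      Fintype.card_prod, Fintype.card_bool, nsmul_eq_mul]
    push_cast
    ring
  rw [Gval, htrace, ofReal_re]
  ring

/-- pretty good quantum strategy, intermediate regime. -/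
theorem pretty_good_strategy_intermediate (γ : ℝ) (hγ : 1/2 < γ) (hγ' : γ < 1/Real.sqrt 2) :
    Admissible γ
      (effM (Qmid γ false) (Qmid γ false) (proj PsiP)
        + effM (Qmid γ true) (Qmid γ true) (proj PsiP))
      (effM (Qmid γ false) (Qmid γ true) (proj PsiP)
        + effM (Qmid γ true) (Qmid γ false) (proj PsiP))
      (1 - (effM (Qmid γ false) (Qmid γ false) (proj PsiP)
             + effM (Qmid γ true) (Qmid γ true) (proj PsiP))
         - (effM (Qmid γ false) (Qmid γ true) (proj PsiP)
             + effM (Qmid γ true) (Qmid γ false) (proj PsiP))) ∧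
    Gval (effM (Qmid γ false) (Qmid γ false) (proj PsiP)
            + effM (Qmid γ true) (Qmid γ true) (proj PsiP))
         (effM (Qmid γ false) (Qmid γ true) (proj PsiP)
            + effM (Qmid γ true) (Qmid γ false) (proj PsiP))
      = γ^2/2 + 1/(8*Real.sqrt 2) ∧
    8 * (Gval (effM (Qmid γ false) (Qmid γ false) (proj PsiP)
                 + effM (Qmid γ true) (Qmid γ true) (proj PsiP))
              (effM (Qmid γ false) (Qmid γ true) (proj PsiP)
                 + effM (Qmid γ true) (Qmid γ false) (proj PsiP)) / γ^2 - 1/2)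
      = 1/(Real.sqrt 2 * γ^2) := by
  have hγ1 : γ < 1 := hγ'.trans <| (div_lt_one (by positivity)).2 Real.one_lt_sqrt_two
  have hG : Gval (guessEffect γ false) (guessEffect γ true) = γ ^ 2 / 2 + 1 / (8 * Real.sqrt 2) :=
    Gval_eq_of_trace_eq (guessEffect γ) _ (trace_kronecker_mul_guessEffect_fxy γ)
  rw [← guessEffect_false, ← guessEffect_true]
  refine ⟨⟨posSemidef_guessEffect hγ.le false, posSemidef_guessEffect hγ.le true, ?_, by abel,
    fun x y => ?_⟩, hG, ?_⟩
  · rw [one_sub_guessEffect]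
    exact posSemidef_parity (by linarith) (by nlinarith)
  · rw [one_sub_guessEffect, trace_kronecker_mul_parity]
    push_cast
    ring
  · rw [hG]
    field_simp
    ring
end
end
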